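/- Let f : ℝⁿ → ℝ ∪ {±∞} be lower semi-continuous with {x : f(x) < +∞} unbounded. Then for every v in the interior of D^↑_f(∞) := {v ∈ ℝⁿ : f^↑(∞; v) < +∞}, the function f is directionally Lipschitz at infinity with respect to v, i.e., f^†(∞; v) < +∞. -/

import Mathlib

open Filter Topology Metric Set Bornology
open scoped InnerProductSpace Pointwise

set_option maxHeartbeats 2000000

noncomputable section

/-- Euclidean `n`-space. -/
abbrev En (n : ℕ) : Type := EuclideanSpace ℝ (Fin n)

/-- The Clarke tangent cone at infinity of `C ⊆ E`, where "going to infinity" is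
measured by `‖p x‖ → ∞` for a projection map `p`:  `v` belongs to the cone iff for all
sequences `x k ∈ C` with `‖p (x k)‖ → ∞` and all positive sequences `t k → 0` there is a
sequence `w k → v` with `x k + t k • w k ∈ C` for all `k`. -/
def tangentConeAtInfty {E F : Type*} [NormedAddCommGroup E] [NormedSpace ℝ E] [Norm F]
    (p : E → F) (C : Set E) : Set E :=
  {v | ∀ (x : ℕ → E) (t : ℕ → ℝ), (∀ k, x k ∈ C) →
      Tendsto (fun k => ‖p (x k)‖) atTop atTop →
      (∀ k, 0 < t k) → Tendsto t atTop (𝓝 0) →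
      ∃ w : ℕ → E, Tendsto w atTop (𝓝 v) ∧ ∀ k, x k + t k • w k ∈ C}

/-- Extended-real subtraction with the paper's convention that `λ₁ + λ₂ = +∞` whenever one
of the summands is `+∞`; thus `a - b = +∞` if `a = +∞` or `b = -∞`. -/
def esub (a b : EReal) : EReal := if a = ⊤ ∨ b = ⊥ then ⊤ else a - b

/-- The difference quotient `(f (x + t • w) - f x) / t`. -/
def dq {n : ℕ} (f : En n → EReal) (x : En n) (t : ℝ) (w : En n) : EReal :=
  esub (f (x + t • w)) (f x) / (t : EReal)

/-- The filter of neighborhoods of infinity in `ℝⁿ` (`‖x‖ → ∞`). -/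
def atInfty (n : ℕ) : Filter (En n) := comap (fun x : En n => ‖x‖) atTop

/-- The upper subderivative of `f` at infinity with respect to `v`:
`f^↑(∞; v) = lim_{ε↓0} limsup_{‖x‖→∞, t↓0} inf_{w ∈ B_ε(v)} (f(x+tw) - f(x))/t`;
since the inner `limsup` is antitone in `ε`, the limit as `ε ↓ 0` is the supremum
over `ε > 0`. -/
def upSub {n : ℕ} (f : En n → EReal) (v : En n) : EReal :=
  ⨆ (ε : ℝ) (_ : 0 < ε),
    Filter.limsup (fun q : En n × ℝ => ⨅ w ∈ closedBall v ε, dq f q.1 q.2 w)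
      (atInfty n ×ˢ 𝓝[>] (0:ℝ))

/-- `f^†(∞; v) = limsup_{‖x‖→∞, t↓0, w→v} (f(x+tw) - f(x))/t`; `f` is directionally
Lipschitz at infinity with respect to `v` iff this quantity is `< +∞`. -/
def dagSub {n : ℕ} (f : En n → EReal) (v : En n) : EReal :=
  Filter.limsup (fun q : En n × (ℝ × En n) => dq f q.1 q.2.1 q.2.2)
    (atInfty n ×ˢ (𝓝[>] (0:ℝ) ×ˢ 𝓝 v))

/-! ### auxiliary lemmas -/

lemma dl_exists_nat_ge {a : EReal} (h : a < ⊤) : ∃ m : ℕ, a ≤ m := by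
  induction a with
  | bot => exact ⟨0, bot_le⟩
  | coe r =>
      refine ⟨⌈r⌉₊, ?_⟩
      rw [← EReal.coe_coe_eq_natCast]
      exact EReal.coe_le_coe_iff.2 (Nat.le_ceil r)
  | top => exact absurd h (lt_irrefl _)

lemma dl_dq_lt {n : ℕ} {f : En n → EReal} {x w : En n} {t M : ℝ} (ht : 0 < t)
    (h : dq f x t w < (M : EReal)) :
    f x ≠ ⊥ ∧ f (x + t • w) ≠ ⊤ ∧ f (x + t • w) ≤ f x + ((t * M : ℝ) : EReal) := by
  unfold dq at h
  have h1 : esub (f (x + t • w)) (f x) < ((t * M : ℝ) : EReal) := by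
    by_contra hle
    push_neg at hle
    have h2 : (M : EReal) * (t : EReal) ≤ esub (f (x + t • w)) (f x) := by
      rw [← EReal.coe_mul, mul_comm]; exact hle
    exact absurd h (not_lt.2 ((EReal.le_div_iff_mul_le (by exact_mod_cast ht) (by simp)).2 h2))
  unfold esub at h1
  by_cases hc : f (x + t • w) = ⊤ ∨ f x = ⊥
  · rw [if_pos hc] at h1; exact absurd h1 (not_lt.2 le_top)
  · rw [if_neg hc] at h1
    push_neg at hc
    refine ⟨hc.2, hc.1, ?_⟩
    have h2 := (EReal.sub_le_iff_le_add (b := f x) (c := ((t * M : ℝ) : EReal))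
      (Or.inl hc.2) (Or.inr (EReal.coe_ne_bot _))).1 h1.le
    rwa [add_comm ((t * M : ℝ) : EReal) (f x)] at h2

lemma dl_dq_le {n : ℕ} {f : En n → EReal} {x w : En n} {t M : ℝ} (ht : 0 < t)
    (hb : f x ≠ ⊥) (htop : f (x + t • w) ≠ ⊤)
    (h : f (x + t • w) ≤ f x + ((t * M : ℝ) : EReal)) :
    dq f x t w ≤ (M : EReal) := by
  unfold dq esub
  rw [if_neg (by push_neg; exact ⟨htop, hb⟩)]
  rw [EReal.div_le_iff_le_mul (by exact_mod_cast ht) (by simp), ← EReal.coe_mul]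
  exact (EReal.sub_le_iff_le_add (Or.inl hb) (Or.inr (EReal.coe_ne_bot _))).2
    (by rwa [add_comm (f x) ((t * M : ℝ) : EReal)] at h)

lemma dl_mem_atInfty {n : ℕ} {s : Set (En n)} (R : ℝ) (h : ∀ x : En n, R ≤ ‖x‖ → x ∈ s) :
    s ∈ atInfty n :=
  mem_of_superset (preimage_mem_comap (Ici_mem_atTop R)) (fun x hx => h x hx)

lemma dl_prod_extract {n : ℕ} {E : Set (En n × ℝ)}
    (hE : E ∈ (atInfty n) ×ˢ (𝓝[>] (0:ℝ))) :
    ∃ R δ : ℝ, 0 < δ ∧ ∀ x : En n, ∀ t : ℝ, R ≤ ‖x‖ → 0 < t → t < δ → (x, t) ∈ E := by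
  rcases Filter.mem_prod_iff.1 hE with ⟨A, hA, B, hB, hsub⟩
  rcases Filter.mem_comap.1 hA with ⟨A', hA', hA'sub⟩
  rcases mem_atTop_sets.1 hA' with ⟨R, hR⟩
  rcases mem_nhdsGT_iff_exists_Ioo_subset.1 hB with ⟨δ, hδ, hδsub⟩
  exact ⟨R, δ, hδ, fun x t hx ht htδ =>
    hsub (Set.mk_mem_prod (hA'sub (hR _ hx)) (hδsub ⟨ht, htδ⟩))⟩

lemma dl_limsup_le_upSub {n : ℕ} (f : En n → EReal) (u : En n) {ε : ℝ} (hε : 0 < ε) :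
    Filter.limsup (fun q : En n × ℝ => ⨅ w ∈ closedBall u ε, dq f q.1 q.2 w)
      (atInfty n ×ˢ 𝓝[>] (0:ℝ)) ≤ upSub f u :=
  le_iSup₂ (f := fun (ε : ℝ) (_ : 0 < ε) =>
    Filter.limsup (fun q : En n × ℝ => ⨅ w ∈ closedBall u ε, dq f q.1 q.2 w)
      (atInfty n ×ˢ 𝓝[>] (0:ℝ))) ε hε

lemma dl_upSub_closed {n : ℕ} (f : En n → EReal) (m : ℕ) :
    IsClosed {u : En n | upSub f u ≤ (m : EReal)} := by
  apply isClosed_of_closure_subset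
  intro u hu
  show upSub f u ≤ (m : EReal)
  apply iSup₂_le
  intro ε hε
  rcases Metric.mem_closure_iff.1 hu (ε/2) (by positivity) with ⟨u', hu'F, hdist⟩
  have hsubset : closedBall u' (ε/2) ⊆ closedBall u ε :=
    closedBall_subset_closedBall' (by rw [dist_comm]; linarith)
  have hpt : ∀ q : En n × ℝ,
      (⨅ w ∈ closedBall u ε, dq f q.1 q.2 w) ≤ ⨅ w ∈ closedBall u' (ε/2), dq f q.1 q.2 w := by
    intro q
    exact le_iInf₂ (fun w hw => iInf₂_le w (hsubset hw))
  calc Filter.limsup (fun q : En n × ℝ => ⨅ w ∈ closedBall u ε, dq f q.1 q.2 w)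
        (atInfty n ×ˢ 𝓝[>] (0:ℝ))
      ≤ Filter.limsup (fun q : En n × ℝ => ⨅ w ∈ closedBall u' (ε/2), dq f q.1 q.2 w)
        (atInfty n ×ˢ 𝓝[>] (0:ℝ)) :=
        Filter.limsup_le_limsup (Eventually.of_forall hpt)
    _ ≤ upSub f u' := dl_limsup_le_upSub f u' (by positivity)
    _ ≤ (m : EReal) := hu'F

lemma dl_event {n : ℕ} {f : En n → EReal} {u : En n} {m₀ : ℕ} {μ : EReal}
    (hu : upSub f u ≤ (m₀ : EReal)) (hlt : (m₀ : EReal) < μ) {ε : ℝ} (hε : 0 < ε) :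
    ∀ᶠ q in (atInfty n ×ˢ 𝓝[>] (0:ℝ)), ∃ w, dist w u ≤ ε ∧ dq f q.1 q.2 w < μ := by
  have h1 : Filter.limsup (fun q : En n × ℝ => ⨅ w ∈ closedBall u ε, dq f q.1 q.2 w)
      (atInfty n ×ˢ 𝓝[>] (0:ℝ)) < μ :=
    lt_of_le_of_lt (le_trans (dl_limsup_le_upSub f u hε) hu) hlt
  filter_upwards [eventually_lt_of_limsup_lt h1] with q hq
  by_contra hcon
  push_neg at hcon
  have : μ ≤ ⨅ w ∈ closedBall u ε, dq f q.1 q.2 w :=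
    le_iInf₂ (fun w hw => hcon w (Metric.mem_closedBall.1 hw))
  exact absurd hq (not_lt.2 this)

lemma dl_unif {n : ℕ} {f : En n → EReal} {u₀ : En n} {ρ : ℝ} {m₀ : ℕ} (hρ : 0 < ρ)
    (hball : ∀ u ∈ closedBall u₀ ρ, upSub f u ≤ (m₀ : EReal)) {ε' : ℝ} (hε' : 0 < ε') :
    ∀ᶠ q in (atInfty n ×ˢ 𝓝[>] (0:ℝ)), ∀ u ∈ closedBall u₀ (ρ/2),
      ∃ w, dist w u ≤ ε' ∧ dq f q.1 q.2 w < (((m₀ : ℝ) + 1 : ℝ) : EReal) := by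
  have hμ : ((m₀ : ℕ) : EReal) < (((m₀ : ℝ) + 1 : ℝ) : EReal) := by
    rw [← EReal.coe_coe_eq_natCast]
    exact_mod_cast (lt_add_one (m₀ : ℝ))
  obtain ⟨T, hTfin, hTcover⟩ :=
    totallyBounded_iff.1 (isCompact_closedBall u₀ (ρ/2)).totallyBounded (ε'/3) (by positivity)
  -- keep only useful centers, with representatives in the ball
  classical
  set T' : Set (En n) := {y ∈ T | (ball y (ε'/3) ∩ closedBall u₀ (ρ/2)).Nonempty} with hT'
  have hT'fin : T'.Finite := hTfin.subset (fun y hy => hy.1)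
  have hrep0 : ∀ y : En n, ∃ r, y ∈ T' → r ∈ ball y (ε'/3) ∩ closedBall u₀ (ρ/2) := by
    intro y
    by_cases hy : y ∈ T'
    · obtain ⟨r, hr⟩ := hy.2
      exact ⟨r, fun _ => hr⟩
    · exact ⟨u₀, fun h => absurd h hy⟩
  choose rep hrep using hrep0
  have hev : ∀ᶠ q in (atInfty n ×ˢ 𝓝[>] (0:ℝ)), ∀ y ∈ T',
      ∃ w, dist w (rep y) ≤ ε'/3 ∧ dq f q.1 q.2 w < (((m₀ : ℝ) + 1 : ℝ) : EReal) := by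
    rw [eventually_all_finite hT'fin]
    intro y hy
    have hrepmem : rep y ∈ closedBall u₀ ρ :=
      closedBall_subset_closedBall (by linarith) (hrep y hy).2
    exact dl_event (hball _ hrepmem) hμ (by positivity)
  filter_upwards [hev] with q hq u hu
  obtain ⟨y, hyT, hyu⟩ : ∃ y ∈ T, u ∈ ball y (ε'/3) := by
    simpa using hTcover hu
  have hyT' : y ∈ T' := ⟨hyT, ⟨u, hyu, hu⟩⟩
  obtain ⟨w, hw1, hw2⟩ := hq y hyT'
  refine ⟨w, ?_, hw2⟩
  have h1 : dist (rep y) y < ε'/3 := (hrep y hyT').1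
  have h2 : dist u y < ε'/3 := hyu
  calc dist w u ≤ dist w (rep y) + dist (rep y) y + dist y u := dist_triangle4 w _ y u
    _ ≤ ε'/3 + ε'/3 + ε'/3 := by
        rw [dist_comm y u]; exact add_le_add (add_le_add hw1 h1.le) h2.le
    _ = ε' := by ring

lemma dl_norm_add_le {Q : Type*} [NormedAddCommGroup Q] [InnerProductSpace ℝ Q]
    (a b : Q) (ha : a ≠ 0) (hba : ‖b‖ ≤ ‖a‖) :
    ‖a + b‖ ≤ ‖a‖ + ⟪a, b⟫_ℝ / ‖a‖ + ‖b‖^2 / (2 * ‖a‖) := by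
  have hA : 0 < ‖a‖ := norm_pos_iff.2 ha
  have hsq : ‖a + b‖^2 = ‖a‖^2 + 2*⟪a,b⟫_ℝ + ‖b‖^2 := norm_add_sq_real a b
  have key : ‖a + b‖ * (2 * ‖a‖) ≤ ‖a‖^2 + ‖a + b‖^2 := by
    nlinarith [sq_nonneg (‖a + b‖ - ‖a‖)]
  have h2 : ‖a‖ + ⟪a,b⟫_ℝ / ‖a‖ + ‖b‖^2 / (2 * ‖a‖)
      = (‖a‖^2 + (‖a‖^2 + 2*⟪a,b⟫_ℝ + ‖b‖^2)) / (2 * ‖a‖) := by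
    field_simp; ring
  rw [h2, le_div_iff₀ (by positivity), ← hsq]
  exact key

lemma dl_dini {g : ℝ → ℝ} (hg : ContinuousOn g (Icc 0 1)) (h0 : g 0 ≤ 0)
    (hdec : ∀ s, 0 ≤ s → s < 1 → 0 < g s → ∃ h, 0 < h ∧ s + h ≤ 1 ∧ g (s+h) < g s) :
    g 1 ≤ 0 := by
  by_contra hg1
  push_neg at hg1
  set Z : Set ℝ := Icc 0 1 ∩ g ⁻¹' (Iic 0) with hZ
  have hZne : Z.Nonempty := ⟨0, ⟨le_refl 0, zero_le_one⟩, h0⟩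
  have hZclosed : IsClosed Z := hg.preimage_isClosed_of_isClosed isClosed_Icc isClosed_Iic
  have hZcomp : IsCompact Z := isCompact_Icc.of_isClosed_subset hZclosed (fun s hs => hs.1)
  have hs₂ : sSup Z ∈ Z := hZcomp.sSup_mem hZne
  set s₂ := sSup Z with hs₂def
  have hs₂le : g s₂ ≤ 0 := hs₂.2
  have hs₂Icc : s₂ ∈ Icc (0:ℝ) 1 := hs₂.1
  have hs₂1 : s₂ < 1 := lt_of_le_of_ne hs₂Icc.2 (fun h => by rw [h] at hs₂le; linarith)
  have hpos : ∀ s', s₂ < s' → s' ≤ 1 → 0 < g s' := by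
    intro s' h1 h2
    by_contra hc
    push_neg at hc
    have : s' ∈ Z := ⟨⟨le_trans hs₂Icc.1 h1.le, h2⟩, hc⟩
    exact absurd (le_csSup hZcomp.bddAbove this) (not_le.2 h1)
  have step : ∀ s', s₂ < s' → s' < 1 → g 1 ≤ g s' := by
    intro s' h1 h2
    set B : Set ℝ := Icc s' 1 ∩ g ⁻¹' (Iic (g s')) with hB
    have hBne : B.Nonempty := ⟨s', ⟨le_refl _, h2.le⟩, by simp⟩
    have hsub : Icc s' 1 ⊆ Icc (0:ℝ) 1 :=
      Icc_subset_Icc (le_trans hs₂Icc.1 h1.le) (le_refl _)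
    have hBclosed : IsClosed B :=
      (hg.mono hsub).preimage_isClosed_of_isClosed isClosed_Icc isClosed_Iic
    have hBcomp : IsCompact B := isCompact_Icc.of_isClosed_subset hBclosed (fun s hs => hs.1)
    have hsB : sSup B ∈ B := hBcomp.sSup_mem hBne
    rcases eq_or_lt_of_le hsB.1.2 with heq | hlt
    · -- sSup B = 1
      have := hsB.2
      rw [heq] at this
      exact this
    · exfalso
      have hgpos : 0 < g (sSup B) := hpos _ (lt_of_lt_of_le h1 hsB.1.1) hsB.1.2
      obtain ⟨h, hh0, hh1, hhdec⟩ := hdec (sSup B)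
        (le_trans (le_trans hs₂Icc.1 h1.le) hsB.1.1) hlt hgpos
      have : sSup B + h ∈ B :=
        ⟨⟨le_trans hsB.1.1 (by linarith), hh1⟩, le_trans hhdec.le hsB.2⟩
      have := le_csSup hBcomp.bddAbove this
      linarith
  -- limit s' ↓ s₂
  have hne : NeBot (𝓝[Ioo s₂ 1] s₂) := by
    rw [← mem_closure_iff_nhdsWithin_neBot, closure_Ioo (ne_of_lt hs₂1)]
    exact ⟨le_refl _, hs₂1.le⟩
  have htend : Tendsto g (𝓝[Ioo s₂ 1] s₂) (𝓝 (g s₂)) :=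
    ((hg s₂ hs₂Icc).mono (fun s hs => ⟨le_trans hs₂Icc.1 hs.1.le, hs.2.le⟩)).tendsto
  have hev : ∀ᶠ s in 𝓝[Ioo s₂ 1] s₂, g s < g 1 :=
    htend (Iio_mem_nhds (lt_of_le_of_lt hs₂le hg1))
  obtain ⟨s', hs'1, hs'2⟩ := (hev.and eventually_mem_nhdsWithin).exists
  exact absurd (step s' hs'2.1 hs'2.2) (not_le.2 hs'1)

lemma dl_core {Q : Type*} [NormedAddCommGroup Q] [InnerProductSpace ℝ Q] [ProperSpace Q]
    {C : Set Q} (hC : IsClosed C) (hne : C.Nonempty)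
    (N : Q → ℝ) (hN : ∀ p q : Q, |N p - N q| ≤ dist p q)
    (vert : Q) (hvert : ∀ p ∈ C, ∀ β : ℝ, 0 ≤ β → p + β • vert ∈ C)
    (V : Q) (c K R δ : ℝ) (hc : 0 < c) (hK : ‖V‖ + 1 ≤ K) (hc1 : c ≤ 2) (hδ : 0 < δ)
    (hstep : ∀ z ∈ C, R ≤ N z → ∀ τ : ℝ, 0 < τ → τ < δ → ∀ e : Q, ‖e‖ = 1 →
        ⟪e, vert⟫_ℝ ≤ 0 → ∃ W', z + τ • W' ∈ C ∧ ‖W'‖ ≤ K ∧ ⟪e, V⟫_ℝ - ⟪e, W'⟫_ℝ ≤ -c) :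
    ∀ z ∈ C, R + 2*K*δ ≤ N z → ∀ τ : ℝ, 0 < τ → τ < δ → ∀ W : Q, dist W V ≤ c/2 →
      z + τ • W ∈ C := by
  intro z hz hNz τ hτ hτδ W hW
  have hK0 : 0 < K := lt_of_lt_of_le (by positivity) hK
  have hWV : ‖W - V‖ ≤ c/2 := by rwa [← dist_eq_norm]
  have hWn : ‖W‖ ≤ K := by
    have h1 : ‖W‖ ≤ ‖W - V‖ + ‖V‖ := by
      calc ‖W‖ = ‖(W - V) + V‖ := by rw [sub_add_cancel]
        _ ≤ ‖W - V‖ + ‖V‖ := norm_add_le _ _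
    linarith
  set ξ : ℝ → Q := fun s => z + (s*τ) • W with hξ
  set g : ℝ → ℝ := fun s => infDist (ξ s) C with hg
  have hcontξ : Continuous ξ := by
    apply Continuous.add continuous_const
    exact (continuous_id.mul continuous_const).smul continuous_const
  have hcontg : ContinuousOn g (Icc 0 1) := by
    have hcc : Continuous fun s => infDist (ξ s) C :=
      (continuous_infDist_pt C).comp hcontξ
    exact hcc.continuousOn
  have hg0 : g 0 ≤ 0 := by
    have hξ0 : ξ 0 = z := by rw [hξ]; simp
    rw [hg]
    simp only [hξ0]
    rw [infDist_zero_of_mem hz]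
  have hdec : ∀ s, 0 ≤ s → s < 1 → 0 < g s →
      ∃ h, 0 < h ∧ s + h ≤ 1 ∧ g (s+h) < g s := by
    intro s hs0 hs1 hgs
    obtain ⟨zt, hztC, hdd⟩ := hC.exists_infDist_eq_dist hne (ξ s)
    set d : ℝ := dist (ξ s) zt with hdref
    have hgs_eq : g s = d := by rw [hg]; exact hdd
    have hd0 : 0 < d := by rw [← hgs_eq]; exact hgs
    set a : Q := ξ s - zt with ha
    have hna : ‖a‖ = d := by rw [ha, ← dist_eq_norm]
    have ha0 : a ≠ 0 := by
      intro h0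
      rw [h0, norm_zero] at hna; exact absurd hna.symm (ne_of_gt hd0)
    set e : Q := ‖a‖⁻¹ • a with he
    have hne1 : ‖e‖ = 1 := norm_smul_inv_norm ha0
    -- vertical nonpositivity of the proximal normal
    have hiav : ⟪a, vert⟫_ℝ ≤ 0 := by
      have hkey : ∀ β : ℝ, 0 < β → 2 * ⟪a, vert⟫_ℝ ≤ β * ‖vert‖^2 := by
        intro β hβ
        have hmem : zt + β • vert ∈ C := hvert zt hztC β hβ.le
        have h1 : d ≤ dist (ξ s) (zt + β • vert) := by
          rw [← hdd]; exact infDist_le_dist_of_mem hmem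
        have h2 : dist (ξ s) (zt + β • vert) = ‖a - β • vert‖ := by
          rw [dist_eq_norm, ha]
          congr 1
          abel
        have h4 : d^2 ≤ ‖a - β • vert‖^2 := by
          rw [h2] at h1
          nlinarith [norm_nonneg (a - β • vert)]
        have h5 : ‖a - β • vert‖^2 = ‖a‖^2 - 2*(β*⟪a, vert⟫_ℝ) + ‖β • vert‖^2 := by
          rw [norm_sub_sq_real, real_inner_smul_right]
        have h6 : ‖β • vert‖^2 = β^2*‖vert‖^2 := by
          rw [norm_smul, Real.norm_eq_abs, mul_pow, sq_abs]
        nlinarith [h4, h5, h6, hna, hβ]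
      by_contra hcon
      push_neg at hcon
      have hS0 : 0 ≤ ‖vert‖^2 := sq_nonneg _
      have hk := hkey (⟪a, vert⟫_ℝ/(‖vert‖^2+1)) (by positivity)
      have h4 : ⟪a, vert⟫_ℝ/(‖vert‖^2+1) * ‖vert‖^2 ≤ ⟪a, vert⟫_ℝ := by
        rw [div_mul_eq_mul_div, div_le_iff₀ (by linarith)]
        nlinarith
      linarith
    have hevert : ⟪e, vert⟫_ℝ ≤ 0 := by
      rw [he, real_inner_smul_left]
      exact mul_nonpos_of_nonneg_of_nonpos (by positivity) hiav
    -- the nearest point is still far out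
    have hdist1 : dist (ξ s) z ≤ K * δ := by
      have hd1 : dist (ξ s) z = ‖(s*τ) • W‖ := by
        rw [hξ]
        simp only []
        rw [dist_eq_norm, add_sub_cancel_left]
      have hsw : ‖(s*τ) • W‖ = (s*τ)*‖W‖ := by
        rw [norm_smul, Real.norm_eq_abs, abs_of_nonneg (mul_nonneg hs0 hτ.le)]
      rw [hd1, hsw]
      nlinarith [mul_nonneg (mul_nonneg (sub_nonneg.2 hs1.le) hτ.le) (norm_nonneg W),
        mul_nonneg hτ.le (sub_nonneg.2 hWn), mul_nonneg (sub_nonneg.2 hτδ.le) hK0.le]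
    have hdK : d ≤ K * δ := by
      rw [← hdd]
      exact le_trans (infDist_le_dist_of_mem hz) hdist1
    have hNzt : R ≤ N zt := by
      have h1 : dist zt z ≤ dist zt (ξ s) + dist (ξ s) z := by exact dist_triangle zt (ξ s) z
      have h2 : dist zt (ξ s) = d := by rw [dist_comm]
      have h4 := abs_le.1 (hN zt z)
      linarith [h4.1, h4.2]
    -- choose the step length
    set h : ℝ := min (1 - s) (min (d / (2*K*τ + 1)) (c*d / (8*τ*K^2))) with hh
    have hh0 : 0 < h := by
      apply lt_min (by linarith)
      exact lt_min (by positivity) (by positivity)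
    have hh1 : h ≤ 1 - s := min_le_left _ _
    have hh2 : h ≤ d / (2*K*τ + 1) := le_trans (min_le_right _ _) (min_le_left _ _)
    have hh3 : h ≤ c*d / (8*τ*K^2) := le_trans (min_le_right _ _) (min_le_right _ _)
    have hhτδ : h*τ < δ := by nlinarith
    obtain ⟨W', hW'C, hW'K, hW'inner⟩ :=
      hstep zt hztC hNzt (h*τ) (by positivity) hhτδ e hne1 hevert
    set b : Q := (h*τ) • (W - W') with hb
    have hnb : ‖b‖ = h*τ*‖W - W'‖ := by
      rw [hb, norm_smul, Real.norm_eq_abs, abs_of_pos (by positivity)]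
    have hWW' : ‖W - W'‖ ≤ 2*K := le_trans (norm_sub_le _ _) (by linarith)
    have hba : ‖b‖ ≤ ‖a‖ := by
      rw [hnb, hna]
      have h2d : h * (2*K*τ + 1) ≤ d := (le_div_iff₀ (by positivity)).1 hh2
      nlinarith [norm_nonneg (W - W'), mul_nonneg hh0.le hτ.le]
    -- the inner product estimate
    have hIe : ⟪e, W - W'⟫_ℝ ≤ -(c/2) := by
      have h1 : ⟪e, W - W'⟫_ℝ = ⟪e, W - V⟫_ℝ + (⟪e, V⟫_ℝ - ⟪e, W'⟫_ℝ) := by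
        rw [inner_sub_right, inner_sub_right]; ring
      have h2 : ⟪e, W - V⟫_ℝ ≤ ‖W - V‖ := by
        calc ⟪e, W - V⟫_ℝ ≤ ‖e‖ * ‖W - V‖ := real_inner_le_norm _ _
          _ = ‖W - V‖ := by rw [hne1, one_mul]
      linarith
    have hξs : ξ (s+h) = ξ s + (h*τ) • W := by
      rw [hξ]
      simp only []
      rw [add_mul, add_smul]
      abel
    have hdiff : ξ (s+h) - (zt + (h*τ) • W') = a + b := by
      rw [hξs, ha, hb, smul_sub]
      abel
    have hstep2 : g (s+h) ≤ ‖a + b‖ := by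
      rw [hg]
      calc infDist (ξ (s+h)) C ≤ dist (ξ (s+h)) (zt + (h*τ) • W') :=
            infDist_le_dist_of_mem hW'C
        _ = ‖a + b‖ := by rw [dist_eq_norm, hdiff]
    have hnorm : ‖a + b‖ ≤ ‖a‖ + ⟪a, b⟫_ℝ / ‖a‖ + ‖b‖^2/(2*‖a‖) :=
      dl_norm_add_le a b ha0 hba
    have hab : ⟪a, b⟫_ℝ = d * (h*τ) * ⟪e, W - W'⟫_ℝ := by
      have h1 : d * ⟪e, W - W'⟫_ℝ = ⟪a, W - W'⟫_ℝ := by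
        rw [he, real_inner_smul_left, hna, ← mul_assoc, mul_inv_cancel₀ (ne_of_gt hd0), one_mul]
      rw [hb, real_inner_smul_right, ← h1]; ring
    have hfrac : ⟪a, b⟫_ℝ / ‖a‖ = (h*τ) * ⟪e, W - W'⟫_ℝ := by
      rw [hab, hna, div_eq_iff (ne_of_gt hd0)]; ring
    have hkey2 : ‖b‖^2/(2*d) ≤ h*τ*(c/4) := by
      rw [div_le_iff₀ (by positivity)]
      have h8 : h * (8*τ*K^2) ≤ c*d := (le_div_iff₀ (by positivity)).1 hh3
      have h9 : ‖W - W'‖^2 ≤ (2*K)^2 := by nlinarith [norm_nonneg (W - W')]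
      have hbb : ‖b‖^2 ≤ (h*τ)^2*(2*K)^2 := by
        rw [hnb, mul_pow]
        exact mul_le_mul_of_nonneg_left h9 (sq_nonneg _)
      have h10 : (h*τ)*(h*(8*τ*K^2)) ≤ (h*τ)*(c*d) :=
        mul_le_mul_of_nonneg_left h8 (mul_nonneg hh0.le hτ.le)
      nlinarith [hbb, h10]
    refine ⟨h, hh0, by linarith, ?_⟩
    rw [hgs_eq]
    have hmid : (h*τ) * ⟪e, W - W'⟫_ℝ ≤ (h*τ)*(-(c/2)) :=
      mul_le_mul_of_nonneg_left hIe (by positivity)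
    calc g (s+h) ≤ ‖a + b‖ := hstep2
      _ ≤ ‖a‖ + ⟪a, b⟫_ℝ / ‖a‖ + ‖b‖^2/(2*‖a‖) := hnorm
      _ ≤ d + (h*τ)*(-(c/2)) + h*τ*(c/4) := by
          rw [hfrac, hna]; linarith [hkey2, hmid]
      _ < d := by linarith [mul_pos (mul_pos hh0 hτ) hc]
  -- conclude via the chaining lemma
  have hfin : g 1 ≤ 0 := dl_dini hcontg hg0 hdec
  have hξ1 : ξ 1 = z + τ • W := by rw [hξ]; simp
  have : infDist (z + τ • W) C = 0 := by
    have h1 : infDist (ξ 1) C ≤ 0 := hfin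
    rw [hξ1] at h1
    exact le_antisymm h1 infDist_nonneg
  exact (hC.mem_iff_infDist_zero hne).2 this


/-! ### The product space `ℝⁿ × ℝ` with the euclidean norm -/

abbrev Pn (n : ℕ) : Type := WithLp 2 (En n × ℝ)

def mkp {n : ℕ} (y : En n) (a : ℝ) : Pn n := (WithLp.equiv 2 (En n × ℝ)).symm (y, a)

lemma mkp_congr {n : ℕ} {y y' : En n} {a a' : ℝ} (h1 : y = y') (h2 : a = a') :
    mkp y a = mkp y' a' := by rw [h1, h2]

lemma dl_mkp_norm_le {n : ℕ} (y : En n) (a : ℝ) : ‖mkp y a‖ ≤ ‖y‖ + |a| := by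
  have h := WithLp.prod_norm_sq_eq_of_L2 (mkp y a)
  have hf : (mkp y a).fst = y := rfl
  have hs : (mkp y a).snd = a := rfl
  rw [hf, hs, Real.norm_eq_abs] at h
  nlinarith [norm_nonneg (mkp y a), norm_nonneg y, abs_nonneg a,
    mul_nonneg (norm_nonneg y) (abs_nonneg a)]

lemma dl_fst_norm_le {n : ℕ} (p : Pn n) : ‖p.fst‖ ≤ ‖p‖ := by
  have h := WithLp.prod_norm_sq_eq_of_L2 p
  nlinarith [norm_nonneg p, norm_nonneg p.fst, sq_nonneg ‖p.snd‖]

lemma dl_inner_mkp {n : ℕ} (e : Pn n) (y : En n) (a : ℝ) :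
    ⟪e, mkp y a⟫_ℝ = ⟪e.fst, y⟫_ℝ + e.snd * a := by
  rw [WithLp.prod_inner_apply]
  exact congrArg (⟪e.fst, y⟫_ℝ + ·) (mul_comm a e.snd)

/-- Corollary 4.11: on the interior of `D^↑_f(∞)` the function `f` is directionally
Lipschitz at infinity. -/
theorem stmt11 (n : ℕ) (f : En n → EReal) (hlsc : LowerSemicontinuous f)
    (hunb : ¬ IsBounded {x : En n | f x < ⊤}) (v : En n)
    (hv : v ∈ interior {v : En n | upSub f v < ⊤}) :
    dagSub f v < ⊤ := by
  classical
  -- a closed ball around `v` on which `upSub f < ⊤`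
  obtain ⟨ε₀, hε₀, hball₀⟩ := Metric.mem_nhds_iff.1 (mem_interior_iff_mem_nhds.1 hv)
  set δ₀ : ℝ := ε₀/2 with hδ₀def
  have hδ₀ : 0 < δ₀ := by positivity
  have hδ₀sub : ∀ u, dist u v ≤ δ₀ → upSub f u < ⊤ := by
    intro u hu
    exact hball₀ (by rw [mem_ball]; rw [hδ₀def] at hu; linarith)
  -- Baire category: a small ball on which `upSub f` is uniformly bounded
  have hGclosed : ∀ m : ℕ, IsClosed ({u : En n | upSub f u ≤ (m : EReal)}
      ∪ {u : En n | δ₀ ≤ dist u v}) := fun m =>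
    (dl_upSub_closed f m).union
      (isClosed_le continuous_const (Continuous.dist continuous_id continuous_const))
  have hGunion : (⋃ m : ℕ, ({u : En n | upSub f u ≤ (m : EReal)}
      ∪ {u : En n | δ₀ ≤ dist u v})) = univ := by
    ext u
    simp only [mem_iUnion, mem_univ, iff_true, mem_union, mem_setOf_eq]
    rcases le_or_gt δ₀ (dist u v) with h | h
    · exact ⟨0, Or.inr h⟩
    · obtain ⟨m, hm⟩ := dl_exists_nat_ge (hδ₀sub u h.le)
      exact ⟨m, Or.inl hm⟩
  have hdense := dense_iUnion_interior_of_closed hGclosed hGunion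
  obtain ⟨u₀, hu₀mem⟩ := hdense.inter_open_nonempty (ball v δ₀) isOpen_ball
    ⟨v, mem_ball_self hδ₀⟩
  have hpv : dist u₀ v < δ₀ := hu₀mem.1
  obtain ⟨m₀, hm₀⟩ := mem_iUnion.1 hu₀mem.2
  obtain ⟨ρ₀, hρ₀, hρ₀sub⟩ := Metric.mem_nhds_iff.1 (mem_interior_iff_mem_nhds.1 hm₀)
  set ρ : ℝ := min (ρ₀/2) ((δ₀ - dist u₀ v)/2) with hρdef
  have hρ : 0 < ρ := lt_min (by positivity) (by linarith)
  have hFball : ∀ u ∈ closedBall u₀ ρ, upSub f u ≤ ((m₀ : ℕ) : EReal) := by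
    intro u hu
    have hu' : dist u u₀ ≤ ρ := mem_closedBall.1 hu
    have hρρ₀ : ρ ≤ ρ₀/2 := min_le_left _ _
    have hu1 := hρ₀sub (show u ∈ ball u₀ ρ₀ by rw [mem_ball]; linarith)
    rcases hu1 with h | h
    · exact h
    · exfalso
      have hρδ : ρ ≤ (δ₀ - dist u₀ v)/2 := min_le_right _ _
      have : dist u v ≤ dist u u₀ + dist u₀ v := dist_triangle u u₀ v
      have hd := h
      simp only [mem_setOf_eq] at hd
      linarith
  -- constants
  set mρ : ℝ := min (ρ/2) 1 with hmρdef
  have hmρ : 0 < mρ := lt_min (by positivity) one_pos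
  have hmρ1 : mρ ≤ 1 := min_le_right _ _
  have hmρρ : mρ ≤ ρ/2 := min_le_left _ _
  set cc : ℝ := mρ/2 with hccdef
  have hcc : 0 < cc := by positivity
  have hcc2 : cc ≤ 2 := by linarith
  set ε' : ℝ := mρ/4 with hε'def
  have hε' : 0 < ε' := by positivity
  -- uniform tangent steps
  obtain ⟨R_U, δ_U, hδ_U, hU⟩ := dl_prod_extract (dl_unif hρ hFball hε')
  -- the epigraph
  set Cset : Set (Pn n) := {p : Pn n | f p.fst ≤ ((p.snd : ℝ) : EReal)} with hCsetdef
  have hCclosed : IsClosed Cset := by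
    rw [← isOpen_compl_iff, isOpen_iff_mem_nhds]
    intro p hp
    rw [mem_compl_iff, hCsetdef, mem_setOf_eq, not_le] at hp
    obtain ⟨r, hr1, hr2⟩ : ∃ r : ℝ, ((p.snd : ℝ) : EReal) < (r : EReal) ∧ (r : EReal) < f p.fst := by
      rcases eq_or_ne (f p.fst) ⊤ with htop | htop
      · exact ⟨p.snd + 1, by exact_mod_cast lt_add_one p.snd,
          by rw [htop]; exact EReal.coe_lt_top _⟩
      · have hbot : f p.fst ≠ ⊥ := by
          intro hb; rw [hb] at hp; exact absurd hp (not_lt.2 bot_le)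
        have heq : f p.fst = ((f p.fst).toReal : EReal) := (EReal.coe_toReal htop hbot).symm
        have hlt : p.snd < (f p.fst).toReal := by rw [heq] at hp; exact_mod_cast hp
        refine ⟨(p.snd + (f p.fst).toReal)/2, by exact_mod_cast (by linarith : p.snd < (p.snd + (f p.fst).toReal)/2), ?_⟩
        rw [heq]
        exact_mod_cast (by linarith : (p.snd + (f p.fst).toReal)/2 < (f p.fst).toReal)
    have hcf : Continuous (fun q : Pn n => q.fst) :=
      continuous_fst.comp (WithLp.prod_continuous_ofLp 2 (En n) ℝ)
    have hcs : Continuous (fun q : Pn n => q.snd) :=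
      continuous_snd.comp (WithLp.prod_continuous_ofLp 2 (En n) ℝ)
    have hopen1 : IsOpen {q : Pn n | (r : EReal) < f q.fst} :=
      (hlsc.isOpen_preimage r).preimage hcf
    have hopen2 : IsOpen {q : Pn n | q.snd < r} := isOpen_Iio.preimage hcs
    apply mem_of_superset ((hopen1.inter hopen2).mem_nhds ⟨hr2, by exact_mod_cast hr1⟩)
    rintro q ⟨hq1, hq2⟩
    rw [mem_compl_iff, hCsetdef, mem_setOf_eq, not_le]
    calc ((q.snd : ℝ) : EReal) < (r : EReal) := by exact_mod_cast hq2
      _ < f q.fst := hq1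
  have hCne : Cset.Nonempty := by
    have hne : {x : En n | f x < ⊤}.Nonempty := by
      rcases Set.eq_empty_or_nonempty {x : En n | f x < ⊤} with he | hne
      · rw [he] at hunb; exact absurd Bornology.isBounded_empty hunb
      · exact hne
    obtain ⟨x₀, hx₀⟩ := hne
    obtain ⟨m, hm⟩ := dl_exists_nat_ge hx₀
    refine ⟨mkp x₀ (m : ℝ), ?_⟩
    show f x₀ ≤ (((m : ℝ) : ℝ) : EReal)
    rw [EReal.coe_coe_eq_natCast]
    exact hm
  set vert : Pn n := mkp 0 1 with hvertdef
  set V : Pn n := mkp u₀ (((m₀:ℝ)+1)+1) with hVdef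
  set K : ℝ := ‖V‖ + ‖u₀‖ + ρ + ((m₀:ℝ)+1) + 2 with hKdef
  have hm₀0 : (0:ℝ) ≤ (m₀:ℝ) := Nat.cast_nonneg _
  have hKge : ‖V‖ + 1 ≤ K := by rw [hKdef]; linarith [norm_nonneg u₀]
  have hK0 : 0 < K := by linarith [norm_nonneg V]
  -- Lipschitz projection
  have hNlip : ∀ p q : Pn n, |‖p.fst‖ - ‖q.fst‖| ≤ dist p q := by
    intro p q
    have h1 : |‖p.fst‖ - ‖q.fst‖| ≤ ‖p.fst - q.fst‖ := abs_norm_sub_norm_le _ _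
    have h2 : ‖p.fst - q.fst‖ = ‖(p - q).fst‖ := rfl
    rw [h2] at h1
    calc |‖p.fst‖ - ‖q.fst‖| ≤ ‖(p - q).fst‖ := h1
      _ ≤ ‖p - q‖ := dl_fst_norm_le _
      _ = dist p q := (dist_eq_norm _ _).symm
  -- vertical monotonicity of the epigraph
  have hvert' : ∀ p ∈ Cset, ∀ β : ℝ, 0 ≤ β → p + β • vert ∈ Cset := by
    intro p hp β hβ
    show f ((p + β • vert).fst) ≤ (((p + β • vert).snd : ℝ) : EReal)
    have hf : (p + β • vert).fst = p.fst + β • (0 : En n) := rfl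
    have hs : (p + β • vert).snd = p.snd + β * 1 := rfl
    rw [hf, hs, smul_zero, add_zero, mul_one]
    exact le_trans hp (EReal.coe_le_coe_iff.2 (by linarith))
  -- uniform tangent steps for the epigraph, in the form needed by `dl_core`
  have hstepC : ∀ zp ∈ Cset, R_U ≤ ‖zp.fst‖ → ∀ τ : ℝ, 0 < τ → τ < δ_U →
      ∀ e : Pn n, ‖e‖ = 1 → ⟪e, vert⟫_ℝ ≤ 0 →
      ∃ W', zp + τ • W' ∈ Cset ∧ ‖W'‖ ≤ K ∧ ⟪e, V⟫_ℝ - ⟪e, W'⟫_ℝ ≤ -cc := by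
    intro zp hzp hNzp τ hτ hτδ e he1 hevert
    have hesnd : e.snd ≤ 0 := by
      rw [hvertdef, dl_inner_mkp] at hevert
      simpa using hevert
    have hefst : ‖e.fst‖ ≤ 1 := by rw [← he1]; exact dl_fst_norm_le e
    have humem : u₀ + (ρ/2) • e.fst ∈ closedBall u₀ (ρ/2) := by
      rw [mem_closedBall, dist_eq_norm, add_sub_cancel_left, norm_smul, Real.norm_eq_abs,
        abs_of_pos (by positivity : (0:ℝ) < ρ/2)]
      nlinarith
    obtain ⟨w, hwu, hdqw⟩ := hU zp.fst τ hNzp hτ hτδ _ humem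
    obtain ⟨hbot', htop', hle'⟩ := dl_dq_lt hτ hdqw
    refine ⟨mkp w ((m₀:ℝ)+1), ?_, ?_, ?_⟩
    · show f ((zp + τ • mkp w ((m₀:ℝ)+1)).fst) ≤ (((zp + τ • mkp w ((m₀:ℝ)+1)).snd : ℝ) : EReal)
      have hf : (zp + τ • mkp w ((m₀:ℝ)+1)).fst = zp.fst + τ • w := rfl
      have hs : (zp + τ • mkp w ((m₀:ℝ)+1)).snd = zp.snd + τ * ((m₀:ℝ)+1) := rfl
      rw [hf, hs]
      calc f (zp.fst + τ • w) ≤ f zp.fst + ((τ * ((m₀:ℝ)+1) : ℝ) : EReal) := hle'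
        _ ≤ ((zp.snd : ℝ) : EReal) + ((τ * ((m₀:ℝ)+1) : ℝ) : EReal) := add_le_add_left hzp _
        _ = ((zp.snd + τ * ((m₀:ℝ)+1) : ℝ) : EReal) := (EReal.coe_add _ _).symm
    · have hwn : ‖w‖ ≤ ‖u₀‖ + ρ := by
        have h1 : ‖w - (u₀ + (ρ/2) • e.fst)‖ ≤ ε' := by rw [← dist_eq_norm]; exact hwu
        have h2 : ‖w‖ ≤ ‖w - (u₀ + (ρ/2) • e.fst)‖ + ‖u₀ + (ρ/2) • e.fst‖ := by
          calc ‖w‖ = ‖(w - (u₀ + (ρ/2) • e.fst)) + (u₀ + (ρ/2) • e.fst)‖ := by rw [sub_add_cancel]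
            _ ≤ _ := norm_add_le _ _
        have h3 : ‖u₀ + (ρ/2) • e.fst‖ ≤ ‖u₀‖ + ρ/2 := by
          calc ‖u₀ + (ρ/2) • e.fst‖ ≤ ‖u₀‖ + ‖(ρ/2) • e.fst‖ := norm_add_le _ _
            _ ≤ ‖u₀‖ + ρ/2 := by
                rw [norm_smul, Real.norm_eq_abs, abs_of_pos (by positivity : (0:ℝ) < ρ/2)]
                nlinarith
        have hε'ρ : ε' ≤ ρ/2 := by rw [hε'def]; linarith
        linarith
      calc ‖mkp w ((m₀:ℝ)+1)‖ ≤ ‖w‖ + |(m₀:ℝ)+1| := dl_mkp_norm_le _ _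
        _ ≤ (‖u₀‖ + ρ) + ((m₀:ℝ)+1) := by rw [abs_of_pos (by linarith)]; linarith
        _ ≤ K := by rw [hKdef]; linarith [norm_nonneg V]
    · rw [hVdef, dl_inner_mkp, dl_inner_mkp]
      have hinner_sub : ⟪e.fst, u₀⟫_ℝ - ⟪e.fst, w⟫_ℝ = ⟪e.fst, u₀ - w⟫_ℝ :=
        (inner_sub_right _ _ _).symm
      have hiw : ⟪e.fst, u₀ - w⟫_ℝ ≤ -(ρ/2)*‖e.fst‖^2 + ε' := by
        have h1 : u₀ - w = -((ρ/2) • e.fst) + ((u₀ + (ρ/2) • e.fst) - w) := by module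
        rw [h1, inner_add_right, inner_neg_right, real_inner_smul_right,
          real_inner_self_eq_norm_sq]
        have h2 : ⟪e.fst, (u₀ + (ρ/2) • e.fst) - w⟫_ℝ ≤ ε' := by
          calc ⟪e.fst, (u₀ + (ρ/2) • e.fst) - w⟫_ℝ ≤ ‖e.fst‖ * ‖(u₀ + (ρ/2) • e.fst) - w‖ :=
                real_inner_le_norm _ _
            _ ≤ 1 * ε' := by
                apply mul_le_mul hefst ?_ (norm_nonneg _) zero_le_one
                rw [← dist_eq_norm, dist_comm]
                exact hwu
            _ = ε' := one_mul _
        linarith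
      have hsq : ‖e.fst‖^2 + e.snd^2 = 1 := by
        have h := WithLp.prod_norm_sq_eq_of_L2 e
        rw [he1, Real.norm_eq_abs, sq_abs] at h
        linarith [h]
      have hsnd1 : -1 ≤ e.snd := by nlinarith [sq_nonneg ‖e.fst‖]
      have hprod : 0 ≤ (-e.snd) * (1 + e.snd) :=
        mul_nonneg (by linarith) (by linarith)
      rw [hccdef]
      nlinarith [sq_nonneg ‖e.fst‖, mul_le_mul_of_nonneg_right hmρρ (sq_nonneg ‖e.fst‖),
        mul_le_mul_of_nonneg_right hmρ1 (neg_nonneg.2 hesnd)]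
  -- hypertangency of the epigraph
  have hyper := dl_core hCclosed hCne (fun p : Pn n => ‖p.fst‖) hNlip vert hvert' V cc K
    R_U δ_U hcc hKge hcc2 hδ_U hstepC
  -- the auxiliary direction `u₁`
  set u₁ : En n := v + (2⁻¹ : ℝ) • (v - u₀) with hu₁def
  have hu₁v : dist u₁ v ≤ δ₀ := by
    rw [hu₁def, dist_eq_norm]
    have h1 : v + (2⁻¹ : ℝ) • (v - u₀) - v = (2⁻¹ : ℝ) • (v - u₀) := by module
    rw [h1, norm_smul, Real.norm_eq_abs]
    have h2 : ‖v - u₀‖ = dist u₀ v := by rw [← dist_eq_norm, dist_comm]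
    rw [h2, abs_of_pos (by norm_num : (0:ℝ) < (2⁻¹:ℝ))]
    linarith
  obtain ⟨m₁, hm₁⟩ := dl_exists_nat_ge (hδ₀sub u₁ hu₁v)
  have hm₁M : ((m₁ : ℕ) : EReal) < (((m₁:ℝ)+1 : ℝ) : EReal) := by
    rw [← EReal.coe_coe_eq_natCast]
    exact_mod_cast lt_add_one (m₁:ℝ)
  obtain ⟨R₁, δ₁, hδ₁, h₁⟩ := dl_prod_extract (dl_event hm₁ hm₁M
    (show (0:ℝ) < cc/16 by positivity))
  -- final constants
  set M' : ℝ := ((m₁:ℝ)+1) + ((m₀:ℝ)+1) + 1 with hM'def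
  set Rst : ℝ := max R₁ (R_U + 2*K*δ_U + (‖u₁‖ + 1) + 1) with hRstdef
  set δst : ℝ := min 1 (min ((3/2)*δ₁) (3*δ_U)) with hδstdef
  have hδst : 0 < δst := by
    apply lt_min one_pos
    exact lt_min (by positivity) (by positivity)
  -- the main pointwise estimate
  have hmain : ∀ (x : En n) (t : ℝ) (w : En n), Rst ≤ ‖x‖ → 0 < t → t < δst →
      dist w v ≤ cc/24 → dq f x t w ≤ ((M' : ℝ) : EReal) := by
    intro x t w hx ht htδ hwv
    have ht1 : t < 1 := lt_of_lt_of_le htδ (min_le_left _ _)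
    have htδ₁ : t < (3/2)*δ₁ :=
      lt_of_lt_of_le htδ (le_trans (min_le_right _ _) (min_le_left _ _))
    have htδU : t < 3*δ_U :=
      lt_of_lt_of_le htδ (le_trans (min_le_right _ _) (min_le_right _ _))
    have ht' : 0 < (2/3)*t := by positivity
    have ht'δ₁ : (2/3)*t < δ₁ := by nlinarith
    obtain ⟨a, hau₁, hdqa⟩ := h₁ x ((2/3)*t) (le_trans (le_max_left _ _) hx) ht' ht'δ₁
    obtain ⟨hbot, hytop, hyle⟩ := dl_dq_lt ht' hdqa
    set y : En n := x + ((2/3)*t) • a with hydef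
    have hcc1 : cc ≤ 1 := by linarith
    have hna : ‖a‖ ≤ ‖u₁‖ + 1 := by
      have h1 : ‖a - u₁‖ ≤ cc/16 := by rw [← dist_eq_norm]; exact hau₁
      have h2 : ‖a‖ ≤ ‖a - u₁‖ + ‖u₁‖ := by
        calc ‖a‖ = ‖(a - u₁) + u₁‖ := by rw [sub_add_cancel]
          _ ≤ _ := norm_add_le _ _
      linarith
    have hyn : R_U + 2*K*δ_U ≤ ‖y‖ := by
      have h5 : ‖x‖ ≤ ‖y‖ + ‖((2/3)*t) • a‖ := by
        calc ‖x‖ = ‖y - ((2/3)*t) • a‖ := by rw [hydef]; congr 1; abel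
          _ ≤ ‖y‖ + ‖((2/3)*t) • a‖ := norm_sub_le _ _
      have h6 : ‖((2/3)*t) • a‖ ≤ ‖u₁‖ + 1 := by
        rw [norm_smul, Real.norm_eq_abs, abs_of_pos ht']
        nlinarith [norm_nonneg a]
      have h7 : R_U + 2*K*δ_U + (‖u₁‖ + 1) + 1 ≤ ‖x‖ := le_trans (le_max_right _ _) hx
      linarith
    -- a real level above `f y`
    obtain ⟨α, hyα, hαcase⟩ : ∃ α : ℝ, f y ≤ (α : EReal) ∧
        (f x = ⊤ ∨ (f x ≠ ⊤ ∧ (α : EReal) ≤ f x + (((2/3)*t*((m₁:ℝ)+1) : ℝ) : EReal))) := by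
      rcases eq_or_ne (f x) ⊤ with hfx | hfx
      · exact ⟨(f y).toReal, EReal.le_coe_toReal hytop, Or.inl hfx⟩
      · have hr : f x = ((f x).toReal : EReal) := (EReal.coe_toReal hfx hbot).symm
        refine ⟨(f x).toReal + (2/3)*t*((m₁:ℝ)+1), ?_, Or.inr ⟨hfx, ?_⟩⟩
        · rw [EReal.coe_add, ← hr]
          exact hyle
        · rw [EReal.coe_add, ← hr]
    have hymem : mkp y α ∈ Cset := by
      show f y ≤ ((α : ℝ) : EReal)
      exact hyα
    -- the second direction
    set b : En n := (3:ℝ) • w - (2:ℝ) • a with hbdef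
    have hbu₀ : ‖b - u₀‖ ≤ cc/4 := by
      have hbeq : b - u₀ = (3:ℝ) • (w - v) - (2:ℝ) • (a - u₁) := by
        rw [hbdef, hu₁def]; module
      rw [hbeq]
      have h1 : ‖(3:ℝ) • (w - v)‖ = 3*‖w - v‖ := by
        rw [norm_smul, Real.norm_eq_abs, abs_of_pos (by norm_num : (0:ℝ) < 3)]
      have h2 : ‖(2:ℝ) • (a - u₁)‖ = 2*‖a - u₁‖ := by
        rw [norm_smul, Real.norm_eq_abs, abs_of_pos (by norm_num : (0:ℝ) < 2)]
      have h3 : ‖w - v‖ ≤ cc/24 := by rw [← dist_eq_norm]; exact hwv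
      have h4 : ‖a - u₁‖ ≤ cc/16 := by rw [← dist_eq_norm]; exact hau₁
      calc ‖(3:ℝ) • (w - v) - (2:ℝ) • (a - u₁)‖
          ≤ ‖(3:ℝ) • (w - v)‖ + ‖(2:ℝ) • (a - u₁)‖ := norm_sub_le _ _
        _ ≤ cc/4 := by rw [h1, h2]; linarith
    have hWmem : dist (mkp b (((m₀:ℝ)+1)+1)) V ≤ cc/2 := by
      have hdiff : mkp b (((m₀:ℝ)+1)+1) - V = mkp (b - u₀) 0 := by
        rw [hVdef]
        have : mkp b (((m₀:ℝ)+1)+1) - mkp u₀ (((m₀:ℝ)+1)+1)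
            = mkp (b - u₀) ((((m₀:ℝ)+1)+1) - (((m₀:ℝ)+1)+1)) := rfl
        rw [this, sub_self]
      rw [dist_eq_norm, hdiff]
      calc ‖mkp (b - u₀) (0:ℝ)‖ ≤ ‖b - u₀‖ + |(0:ℝ)| := dl_mkp_norm_le _ _
        _ ≤ cc/4 := by rw [abs_zero, add_zero]; exact hbu₀
        _ ≤ cc/2 := by linarith
    have ht3 : 0 < t/3 := by positivity
    have ht3δ : t/3 < δ_U := by linarith
    have hstep3 := hyper (mkp y α) hymem (by exact hyn) (t/3) ht3 ht3δ
      (mkp b (((m₀:ℝ)+1)+1)) hWmem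
    have hfeq : mkp y α + (t/3) • mkp b (((m₀:ℝ)+1)+1)
        = mkp (x + t • w) (α + (t/3)*((((m₀:ℝ)+1)+1))) := by
      have h1 : mkp y α + (t/3) • mkp b (((m₀:ℝ)+1)+1)
          = mkp (y + (t/3) • b) (α + (t/3)*((((m₀:ℝ)+1)+1))) := rfl
      rw [h1]
      apply mkp_congr ?_ rfl
      rw [hydef, hbdef]; module
    rw [hfeq] at hstep3
    have hmem2 : f (x + t • w) ≤ ((α + (t/3)*((((m₀:ℝ)+1)+1)) : ℝ) : EReal) := hstep3
    have hxtwtop : f (x + t • w) ≠ ⊤ := (lt_of_le_of_lt hmem2 (EReal.coe_lt_top _)).ne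
    have hfinal : f (x + t • w) ≤ f x + ((t * M' : ℝ) : EReal) := by
      rcases hαcase with hfx | ⟨hfx, hαle⟩
      · rw [hfx, EReal.top_add_coe]; exact le_top
      · have hr : f x = ((f x).toReal : EReal) := (EReal.coe_toReal hfx hbot).symm
        have hαle' : α ≤ (f x).toReal + (2/3)*t*((m₁:ℝ)+1) := by
          rw [hr, ← EReal.coe_add] at hαle
          exact_mod_cast hαle
        have hreal : α + (t/3)*((((m₀:ℝ)+1)+1)) ≤ (f x).toReal + t * M' := by
          rw [hM'def]
          have hm₁0 : (0:ℝ) ≤ (m₁:ℝ) := Nat.cast_nonneg _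
          nlinarith [mul_nonneg ht.le hm₁0, mul_nonneg ht.le hm₀0]
        calc f (x + t • w) ≤ ((α + (t/3)*((((m₀:ℝ)+1)+1)) : ℝ) : EReal) := hmem2
          _ ≤ (((f x).toReal + t * M' : ℝ) : EReal) := EReal.coe_le_coe_iff.2 hreal
          _ = f x + ((t * M' : ℝ) : EReal) := by rw [EReal.coe_add, ← hr]
    exact dl_dq_le ht hbot hxtwtop hfinal
  -- conclusion via the limsup
  have hevfinal : {q : En n × (ℝ × En n) | dq f q.1 q.2.1 q.2.2 ≤ ((M' : ℝ) : EReal)}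
      ∈ atInfty n ×ˢ (𝓝[>] (0:ℝ) ×ˢ 𝓝 v) := by
    have h1 : (fun x : En n => ‖x‖) ⁻¹' (Ici Rst) ∈ atInfty n :=
      preimage_mem_comap (Ici_mem_atTop _)
    have h2 : Ioo (0:ℝ) δst ∈ 𝓝[>] (0:ℝ) :=
      Ioo_mem_nhdsGT_of_mem ⟨le_refl (0:ℝ), hδst⟩
    have h3 : closedBall v (cc/24) ∈ 𝓝 v := closedBall_mem_nhds v (by positivity)
    refine mem_of_superset (prod_mem_prod h1 (prod_mem_prod h2 h3)) ?_
    rintro ⟨x, t, w⟩ ⟨hx, ht, hw⟩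
    exact hmain x t w hx ht.1 ht.2 hw
  have hle : dagSub f v ≤ ((M' : ℝ) : EReal) :=
    limsup_le_of_le (by isBoundedDefault) hevfinal
  exact lt_of_le_of_lt hle (EReal.coe_lt_top M')
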